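/- (Square move.) Let T be an MHV collection on {1,…,n} satisfying the non-vanishing condition, and suppose T contains two triplets whose underlying unordered sets are {i,j,k} and {i,k,l}, where i,j,k,l are pairwise distinct. Let T′ be obtained from T by replacing these two triplets with two triplets (with any orderings) whose underlying sets are {i,j,l} and {j,k,l}. Then T′ also satisfies the non-vanishing condition and (f_T)² = (f_{T′})² in ℚ(X). -/

import Mathlib

open MvPolynomial

/-- The polynomial ring `ℚ[X_{m,i} : m ∈ {1,2}, 1 ≤ i ≤ n]` in `2n` indeterminates. -/
abbrev MHV.Poly (n : ℕ) := MvPolynomial (Fin 2 × Fin n) ℚ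

/-- The field of fractions `ℚ(X)`. -/
abbrev MHV.FF (n : ℕ) := FractionRing (MHV.Poly n)

namespace MHV

variable {n : ℕ}

/-- The bracket `⟨ij⟩ = X_{1,i}·X_{2,j} − X_{1,j}·X_{2,i}`. -/
noncomputable def bra (i j : Fin n) : Poly n :=
  X ((0 : Fin 2), i) * X ((1 : Fin 2), j) - X ((0 : Fin 2), j) * X ((1 : Fin 2), i)

/-- A triplet: an ordered triple of indices. -/
abbrev Triplet (n : ℕ) := Fin n × Fin n × Fin n

/-- The entries of a triplet are pairwise distinct. -/
def Triplet.Distinct (t : Triplet n) : Prop :=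
  t.1 ≠ t.2.1 ∧ t.1 ≠ t.2.2 ∧ t.2.1 ≠ t.2.2

/-- The set of indices used by a triplet. -/
def Triplet.indices (t : Triplet n) : Finset (Fin n) := {t.1, t.2.1, t.2.2}

/-- A triplet on the index set `I`: pairwise distinct entries, all belonging to `I`. -/
def Triplet.OnSet (I : Finset (Fin n)) (t : Triplet n) : Prop :=
  t.Distinct ∧ t.indices ⊆ I

/-- The row of the matrix `M(S)` corresponding to the triplet `t = (a,b,c)`:
entry `⟨bc⟩` in column `a`, `⟨ca⟩` in column `b`, `⟨ab⟩` in column `c`, `0` elsewhere. -/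
noncomputable def rowEntry (t : Triplet n) (c : Fin n) : Poly n :=
  if c = t.1 then bra t.2.1 t.2.2
  else if c = t.2.1 then bra t.2.2 t.1
  else if c = t.2.2 then bra t.1 t.2.1
  else 0

/-- The determinant of the matrix whose rows are indexed by the triplets of `S` and
whose columns are the columns of `M(S)` belonging to `cols` (in increasing order). -/
noncomputable def detCols (S : List (Triplet n)) (cols : Finset (Fin n)) : Poly n :=
  Matrix.det (Matrix.of fun r c : Fin S.length =>
    ((cols.sort (· ≤ ·))[c.1]?).elim 0 (rowEntry (S.get r)))

/-- The determinant of `M_{ab}(S)`: the matrix `M(S)` (columns indexed by `I`)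
with columns `a` and `b` deleted. -/
noncomputable def Mdet (S : List (Triplet n)) (I : Finset (Fin n)) (a b : Fin n) : Poly n :=
  detCols S ((I.erase a).erase b)

/-- The product `∏_{(a,b,c) ∈ S} ⟨ab⟩·⟨bc⟩·⟨ca⟩`. -/
noncomputable def denom (S : List (Triplet n)) : Poly n :=
  (S.map fun t => bra t.1 t.2.1 * bra t.2.1 t.2.2 * bra t.2.2 t.1).prod

/-- The canonical map from the polynomial ring to its field of fractions. -/
noncomputable def toFF : Poly n →+* FF n := algebraMap (Poly n) (FF n)

/-- The form `f_S = det(M_{ab}(S))² / (⟨ab⟩² · ∏_{(a,b,c) ∈ S} ⟨ab⟩⟨bc⟩⟨ca⟩)`,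
where `(a,b)` is the pair of the two smallest elements of `I`. -/
noncomputable def fForm (S : List (Triplet n)) (I : Finset (Fin n)) : FF n :=
  if h : 2 ≤ I.card then
    have h1 : I.Nonempty := Finset.card_pos.mp (by omega)
    have h2 : (I.erase (I.min' h1)).Nonempty := by
      rw [← Finset.card_pos, Finset.card_erase_of_mem (I.min'_mem h1)]; omega
    toFF (Mdet S I (I.min' h1) ((I.erase (I.min' h1)).min' h2)) ^ 2 /
      (toFF (bra (I.min' h1) ((I.erase (I.min' h1)).min' h2)) ^ 2 * toFF (denom S))
  else 0

/-- The set of all indices used by the triplets of `S`. -/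
def indexSet (S : List (Triplet n)) : Finset (Fin n) :=
  S.foldr (fun t acc => t.indices ∪ acc) ∅

/-- The non-vanishing condition: every nonempty subcollection consisting of `d` triplets
contains at least `d+2` distinct indices in total. -/
def NonVanishing (T : List (Triplet n)) : Prop :=
  ∀ S : List (Triplet n), S.Sublist T → S ≠ [] → S.length + 2 ≤ (indexSet S).card

/-- An MHV collection on `{1,…,n}`: a list of `n−2` triplets with pairwise
distinct entries (triplets on the full index set). -/
def IsMHV (n : ℕ) (T : List (Triplet n)) : Prop :=
  T.length = n - 2 ∧ ∀ t ∈ T, t.Distinct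

/-- The unordered pair `{i,j}` belongs to the doublet set `D(T)`:
`i` and `j` occur together in an odd number of triplets of `T`. -/
def InDoublets (T : List (Triplet n)) (i j : Fin n) : Prop :=
  Odd (T.countP fun t => decide (i ∈ t.indices ∧ j ∈ t.indices))

end MHV


namespace MHVAux
variable {α : Type*}

lemma len_special (A B C : List α) (x y : α) :
    (A ++ x :: B ++ y :: C).length = A.length + B.length + C.length + 2 := by
  simp; omega

lemma getElem?_fst (A B C : List α) (x y : α) :
    (A ++ x :: B ++ y :: C)[A.length]? = some x := by
  rw [List.getElem?_append_left (by simp)]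
  rw [List.getElem?_append_right (le_refl _)]
  simp

lemma getElem?_snd (A B C : List α) (x y : α) :
    (A ++ x :: B ++ y :: C)[A.length + B.length + 1]? = some y := by
  rw [List.getElem?_append_right (by simp; omega)]
  have h0 : A.length + B.length + 1 - (A ++ x :: B).length = 0 := by simp
  rw [h0, List.getElem?_cons_zero]

lemma getElem?_other (A B C : List α) (x y x' y' : α) (q : ℕ)
    (h1 : q ≠ A.length) (h2 : q ≠ A.length + B.length + 1) :
    (A ++ x :: B ++ y :: C)[q]? = (A ++ x' :: B ++ y' :: C)[q]? := by
  have key : ∀ (u v : α), (A ++ u :: B ++ v :: C)[q]? =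
      if q < A.length then A[q]?
      else if q - A.length - 1 < B.length then B[q - A.length - 1]?
      else C[q - A.length - B.length - 2]? := by
    intro u v
    by_cases hA : q < A.length
    · rw [if_pos hA, List.getElem?_append_left (by simp; omega),
        List.getElem?_append_left hA]
    · rw [if_neg hA]
      by_cases hB : q - A.length - 1 < B.length
      · rw [if_pos hB, List.getElem?_append_left (by simp; omega),
          List.getElem?_append_right (by omega)]
        have h3 : q - A.length = (q - A.length - 1) + 1 := by omega
        conv_lhs => rw [h3]
        rw [List.getElem?_cons_succ]
      · rw [if_neg hB, List.getElem?_append_right (show (A ++ u :: B).length ≤ q by simp; omega)]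
        have h3 : q - (A ++ u :: B).length = (q - A.length - B.length - 2) + 1 := by simp; omega
        rw [h3, List.getElem?_cons_succ]
  rw [key x y, key x' y']

lemma getElem_fst (A B C : List α) (x y : α)
    (h : A.length < (A ++ x :: B ++ y :: C).length) :
    (A ++ x :: B ++ y :: C)[A.length] = x := by
  have := getElem?_fst A B C x y
  rw [List.getElem?_eq_getElem h] at this
  exact Option.some.inj this

lemma getElem_snd (A B C : List α) (x y : α)
    (h : A.length + B.length + 1 < (A ++ x :: B ++ y :: C).length) :
    (A ++ x :: B ++ y :: C)[A.length + B.length + 1] = y := by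
  have := getElem?_snd A B C x y
  rw [List.getElem?_eq_getElem h] at this
  exact Option.some.inj this

lemma getElem_other (A B C : List α) (x y x' y' : α) (q : ℕ)
    (h : q < (A ++ x :: B ++ y :: C).length) (h' : q < (A ++ x' :: B ++ y' :: C).length)
    (h1 : q ≠ A.length) (h2 : q ≠ A.length + B.length + 1) :
    (A ++ x :: B ++ y :: C)[q] = (A ++ x' :: B ++ y' :: C)[q] := by
  have := getElem?_other A B C x y x' y' q h1 h2
  rw [List.getElem?_eq_getElem h, List.getElem?_eq_getElem h'] at this
  exact Option.some.inj this

end MHVAux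

namespace MHV
variable {n : ℕ}

lemma bra_ne_zero {a b : Fin n} (h : a ≠ b) : bra a b ≠ 0 := by
  intro hz
  have := congrArg (eval (fun p : Fin 2 × Fin n =>
    if p = ((0:Fin 2), a) then (1:ℚ) else if p = ((1:Fin 2), b) then 1 else 0)) hz
  simp [bra, Prod.ext_iff, h, h.symm] at this

lemma triplet_cases {t : Triplet n} {a b c : Fin n} (hab : a ≠ b) (hac : a ≠ c) (hbc : b ≠ c)
    (h : t.indices = {a, b, c}) :
    t = (a,b,c) ∨ t = (b,c,a) ∨ t = (c,a,b) ∨ t = (a,c,b) ∨ t = (c,b,a) ∨ t = (b,a,c) := by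
  obtain ⟨x, y, z⟩ := t
  have hx : x ∈ ({a,b,c} : Finset (Fin n)) := h ▸ (by simp [Triplet.indices])
  have hy : y ∈ ({a,b,c} : Finset (Fin n)) := h ▸ (by simp [Triplet.indices])
  have hz : z ∈ ({a,b,c} : Finset (Fin n)) := h ▸ (by simp [Triplet.indices])
  have ha : a ∈ (Triplet.indices (x,y,z) : Finset (Fin n)) := by rw [h]; simp
  have hb : b ∈ (Triplet.indices (x,y,z) : Finset (Fin n)) := by rw [h]; simp
  have hc : c ∈ (Triplet.indices (x,y,z) : Finset (Fin n)) := by rw [h]; simp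
  simp [Triplet.indices] at hx hy hz ha hb hc
  rcases hx with rfl | rfl | rfl <;> rcases hy with rfl | rfl | rfl <;>
    rcases hz with rfl | rfl | rfl <;> simp_all <;> tauto

lemma distinct_of_indices {t : Triplet n} {a b c : Fin n} (hab : a ≠ b) (hac : a ≠ c)
    (hbc : b ≠ c) (h : t.indices = {a, b, c}) : t.Distinct := by
  rcases triplet_cases hab hac hbc h with rfl | rfl | rfl | rfl | rfl | rfl
  · exact ⟨hab, hac, hbc⟩
  · exact ⟨hbc, hab.symm, hac.symm⟩
  · exact ⟨hac.symm, hbc.symm, hab⟩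
  · exact ⟨hac, hab, hbc.symm⟩
  · exact ⟨hbc.symm, hac.symm, hab.symm⟩
  · exact ⟨hab.symm, hbc, hac⟩

/-- The triple product of brackets attached to a triplet. -/
noncomputable def qt (t : Triplet n) : Poly n :=
  bra t.1 t.2.1 * bra t.2.1 t.2.2 * bra t.2.2 t.1

lemma qt_ne_zero {t : Triplet n} (h : t.Distinct) : qt t ≠ 0 :=
  mul_ne_zero (mul_ne_zero (bra_ne_zero h.1) (bra_ne_zero h.2.2)) (bra_ne_zero (Ne.symm h.2.1))

set_option maxHeartbeats 1000000 in
lemma sign_lemma {t : Triplet n} {a b c : Fin n} (hab : a ≠ b) (hac : a ≠ c) (hbc : b ≠ c)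
    (h : t.indices = {a, b, c}) :
    ∃ e : Poly n, e * e = 1 ∧ (∀ x, rowEntry t x = e * rowEntry (a,b,c) x) ∧
      qt t = e * qt (a,b,c) := by
  rcases triplet_cases hab hac hbc h with rfl | rfl | rfl | rfl | rfl | rfl
  · exact ⟨1, by ring, fun x => by ring, by ring⟩
  · refine ⟨1, by ring, fun x => ?_, by unfold qt bra; ring⟩
    by_cases h1 : x = a <;> by_cases h2 : x = b <;> by_cases h3 : x = c <;>
      simp_all [rowEntry] <;> (unfold bra; ring)
  · refine ⟨1, by ring, fun x => ?_, by unfold qt bra; ring⟩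
    by_cases h1 : x = a <;> by_cases h2 : x = b <;> by_cases h3 : x = c <;>
      simp_all [rowEntry] <;> (unfold bra; ring)
  · refine ⟨-1, by ring, fun x => ?_, by unfold qt bra; ring⟩
    by_cases h1 : x = a <;> by_cases h2 : x = b <;> by_cases h3 : x = c <;>
      simp_all [rowEntry] <;> (unfold bra; ring)
  · refine ⟨-1, by ring, fun x => ?_, by unfold qt bra; ring⟩
    by_cases h1 : x = a <;> by_cases h2 : x = b <;> by_cases h3 : x = c <;>
      simp_all [rowEntry] <;> (unfold bra; ring)
  · refine ⟨-1, by ring, fun x => ?_, by unfold qt bra; ring⟩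
    by_cases h1 : x = a <;> by_cases h2 : x = b <;> by_cases h3 : x = c <;>
      simp_all [rowEntry] <;> (unfold bra; ring)

set_option maxHeartbeats 1000000 in
lemma plucker_row1 {i j k l : Fin n} (hij : i ≠ j) (hik : i ≠ k) (hil : i ≠ l)
    (hjk : j ≠ k) (hjl : j ≠ l) (hkl : k ≠ l) (x : Fin n) :
    bra j l * rowEntry (i,j,k) x
      = bra j k * rowEntry (i,j,l) x + (-(bra i j)) * rowEntry (j,k,l) x := by
  by_cases h1 : x = i <;> by_cases h2 : x = j <;> by_cases h3 : x = k <;> by_cases h4 : x = l <;>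
    simp_all [rowEntry] <;> (unfold bra; ring)

set_option maxHeartbeats 1000000 in
lemma plucker_row2 {i j k l : Fin n} (hij : i ≠ j) (hik : i ≠ k) (hil : i ≠ l)
    (hjk : j ≠ k) (hjl : j ≠ l) (hkl : k ≠ l) (x : Fin n) :
    bra j l * rowEntry (i,k,l) x
      = bra k l * rowEntry (i,j,l) x + bra i l * rowEntry (j,k,l) x := by
  by_cases h1 : x = i <;> by_cases h2 : x = j <;> by_cases h3 : x = k <;> by_cases h4 : x = l <;>
    simp_all [rowEntry] <;> (unfold bra; ring)

lemma plucker {i j k l : Fin n} :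
    bra i j * bra k l + bra i l * bra j k = bra i k * bra j l := by unfold bra; ring

lemma qt_move {i j k l : Fin n} :
    bra j l ^ 2 * (qt (i,j,k) * qt (i,k,l)) = bra i k ^ 2 * (qt (i,j,l) * qt (j,k,l)) := by
  unfold qt bra; ring

lemma detCols_eq_det (S : List (Triplet n)) (cols : Finset (Fin n)) (m : ℕ) (hm : S.length = m) :
    detCols S cols = Matrix.det (Matrix.of fun r c : Fin m =>
      ((cols.sort (· ≤ ·))[c.1]?).elim 0 (rowEntry (S[r.1]'(by omega)))) := by
  subst hm
  rfl

lemma denom_append (S S' : List (Triplet n)) : denom (S ++ S') = denom S * denom S' := by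
  simp [denom]

lemma denom_cons (t : Triplet n) (S : List (Triplet n)) : denom (t :: S) = qt t * denom S := by
  simp [denom, qt]

lemma denom_ne_zero (S : List (Triplet n)) (h : ∀ t ∈ S, t.Distinct) : denom S ≠ 0 := by
  induction S with
  | nil => simp [denom]
  | cons t S ih =>
    rw [denom_cons]
    exact mul_ne_zero (qt_ne_zero (h t (by simp))) (ih fun t' ht' => h t' (by simp [ht']))

lemma indexSet_cons (t : Triplet n) (S : List (Triplet n)) :
    indexSet (t :: S) = t.indices ∪ indexSet S := rfl

lemma indexSet_append (S S' : List (Triplet n)) :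
    indexSet (S ++ S') = indexSet S ∪ indexSet S' := by
  induction S with
  | nil => simp [indexSet]
  | cons t S ih => rw [List.cons_append, indexSet_cons, indexSet_cons, ih, Finset.union_assoc]

set_option maxHeartbeats 1000000 in
lemma nv_move {i j k l : Fin n} (hij : i ≠ j) (hik : i ≠ k) (hil : i ≠ l)
    (hjk : j ≠ k) (hjl : j ≠ l) (hkl : k ≠ l)
    {t₁ t₂ u₁ u₂ : Triplet n}
    (ht₁ : t₁.indices = {i,j,k}) (ht₂ : t₂.indices = {i,k,l})
    (hu₁ : u₁.indices = {i,j,l}) (hu₂ : u₂.indices = {j,k,l})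
    (A B C : List (Triplet n))
    (hNV : NonVanishing (A ++ t₁ :: B ++ t₂ :: C)) :
    NonVanishing (A ++ u₁ :: B ++ u₂ :: C) := by
  intro S' hS' hne
  rw [List.sublist_append_iff] at hS'
  obtain ⟨S₁, S₂, rfl, hS₁, hS₂⟩ := hS'
  rw [List.sublist_append_iff] at hS₁
  obtain ⟨SA, S₁b, rfl, hSA, hS₁b⟩ := hS₁
  rw [List.sublist_cons_iff] at hS₁b
  rw [List.sublist_cons_iff] at hS₂
  rcases hS₁b with hS₁b | ⟨SB, rfl, hSB⟩ <;> rcases hS₂ with hS₂ | ⟨SC, rfl, hSC⟩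
  · -- neither u₁ nor u₂
    have hsub : List.Sublist ((SA ++ S₁b) ++ S₂) ((A ++ t₁ :: B) ++ t₂ :: C) :=
      (hSA.append (hS₁b.cons t₁)).append (hS₂.cons t₂)
    exact hNV _ hsub hne
  · -- u₂ only
    have hsub : List.Sublist ((SA ++ t₁ :: S₁b) ++ t₂ :: SC) ((A ++ t₁ :: B) ++ t₂ :: C) :=
      (hSA.append (List.Sublist.cons₂ t₁ hS₁b)).append (List.Sublist.cons₂ t₂ hSC)
    have h := hNV _ hsub (by simp)
    have hlen : ((SA ++ t₁ :: S₁b) ++ t₂ :: SC).length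
        = ((SA ++ S₁b) ++ u₂ :: SC).length + 1 := by simp; omega
    have hsubset : indexSet ((SA ++ t₁ :: S₁b) ++ t₂ :: SC)
        ⊆ insert i (indexSet ((SA ++ S₁b) ++ u₂ :: SC)) := by
      simp only [indexSet_append, indexSet_cons, ht₁, ht₂, hu₂]
      intro x hx
      simp at hx ⊢
      tauto
    have hcard := Finset.card_le_card hsubset
    have hcard2 := Finset.card_insert_le i (indexSet ((SA ++ S₁b) ++ u₂ :: SC))
    omega
  · -- u₁ only
    have hsub : List.Sublist ((SA ++ t₁ :: SB) ++ t₂ :: S₂) ((A ++ t₁ :: B) ++ t₂ :: C) :=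
      (hSA.append (List.Sublist.cons₂ t₁ hSB)).append (List.Sublist.cons₂ t₂ hS₂)
    have h := hNV _ hsub (by simp)
    have hlen : ((SA ++ t₁ :: SB) ++ t₂ :: S₂).length
        = ((SA ++ u₁ :: SB) ++ S₂).length + 1 := by simp; omega
    have hsubset : indexSet ((SA ++ t₁ :: SB) ++ t₂ :: S₂)
        ⊆ insert k (indexSet ((SA ++ u₁ :: SB) ++ S₂)) := by
      simp only [indexSet_append, indexSet_cons, ht₁, ht₂, hu₁]
      intro x hx
      simp at hx ⊢
      tauto
    have hcard := Finset.card_le_card hsubset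
    have hcard2 := Finset.card_insert_le k (indexSet ((SA ++ u₁ :: SB) ++ S₂))
    omega
  · -- both
    have hsub : List.Sublist ((SA ++ t₁ :: SB) ++ t₂ :: SC) ((A ++ t₁ :: B) ++ t₂ :: C) :=
      (hSA.append (List.Sublist.cons₂ t₁ hSB)).append (List.Sublist.cons₂ t₂ hSC)
    have h := hNV _ hsub (by simp)
    have hlen : ((SA ++ t₁ :: SB) ++ t₂ :: SC).length
        = ((SA ++ u₁ :: SB) ++ u₂ :: SC).length := by simp
    have hseteq : indexSet ((SA ++ t₁ :: SB) ++ t₂ :: SC)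
        = indexSet ((SA ++ u₁ :: SB) ++ u₂ :: SC) := by
      simp only [indexSet_append, indexSet_cons, ht₁, ht₂, hu₁, hu₂]
      ext x
      simp
      tauto
    have hc := congrArg Finset.card hseteq
    omega

set_option maxHeartbeats 1000000 in
lemma det_square_move {i j k l : Fin n} (hij : i ≠ j) (hik : i ≠ k) (hil : i ≠ l)
    (hjk : j ≠ k) (hjl : j ≠ l) (hkl : k ≠ l)
    {t₁ t₂ u₁ u₂ : Triplet n}
    (ht₁ : t₁.indices = {i,j,k}) (ht₂ : t₂.indices = {i,k,l})
    (hu₁ : u₁.indices = {i,j,l}) (hu₂ : u₂.indices = {j,k,l})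
    (A B C : List (Triplet n)) (cols : Finset (Fin n)) :
    ∃ e : Poly n, e * e = 1 ∧
      bra j l * detCols (A ++ t₁ :: B ++ t₂ :: C) cols
        = e * (bra i k * detCols (A ++ u₁ :: B ++ u₂ :: C) cols) ∧
      bra j l ^ 2 * denom (A ++ t₁ :: B ++ t₂ :: C)
        = e * (bra i k ^ 2 * denom (A ++ u₁ :: B ++ u₂ :: C)) := by
  obtain ⟨e₁, he₁, hrow₁, hq₁⟩ := sign_lemma hij hik hjk ht₁
  obtain ⟨e₂, he₂, hrow₂, hq₂⟩ := sign_lemma hik hil hkl ht₂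
  obtain ⟨e₃, he₃, hrow₃, hq₃⟩ := sign_lemma hij hil hjl hu₁
  obtain ⟨e₄, he₄, hrow₄, hq₄⟩ := sign_lemma hjk hjl hkl hu₂
  set Lt := A ++ t₁ :: B ++ t₂ :: C with hLt
  set Lu := A ++ u₁ :: B ++ u₂ :: C with hLu
  set m := Lt.length with hm
  have hmt : Lt.length = m := rfl
  have hmu : Lu.length = m := by
    rw [hm, hLt, hLu, MHVAux.len_special, MHVAux.len_special]
  have hmval : m = A.length + B.length + C.length + 2 := by
    rw [hm, hLt, MHVAux.len_special]
  -- the entry function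
  set Ecol : Triplet n → Fin m → Poly n :=
    fun t c => ((cols.sort (· ≤ ·))[c.1]?).elim 0 (rowEntry t) with hE
  -- lifting lemmas
  have lift2 : ∀ (a b c : Poly n) (t t' t'' : Triplet n),
      (∀ x, a * rowEntry t x = b * rowEntry t' x + c * rowEntry t'' x) →
      ∀ cc : Fin m, a * Ecol t cc = b * Ecol t' cc + c * Ecol t'' cc := by
    intro a b c t t' t'' hx cc
    rcases ho : (cols.sort (· ≤ ·))[cc.1]? with _ | x
    · simp [hE, ho]
    · simpa [hE, ho] using hx x
  have lift1 : ∀ (e : Poly n) (t t' : Triplet n),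
      (∀ x, rowEntry t x = e * rowEntry t' x) →
      ∀ cc : Fin m, Ecol t cc = e * Ecol t' cc := by
    intro e t t' hx cc
    rcases ho : (cols.sort (· ≤ ·))[cc.1]? with _ | x
    · simp [hE, ho]
    · simpa [hE, ho] using hx x
  -- matrices
  have hLtlen : ∀ r : Fin m, r.1 < Lt.length := fun r => lt_of_lt_of_eq r.2 hmt.symm
  have hLulen : ∀ r : Fin m, r.1 < Lu.length := fun r => lt_of_lt_of_eq r.2 hmu.symm
  have hLtlen' : A.length < Lt.length := by rw [hLt, MHVAux.len_special]; omega
  have hLtlen'' : A.length + B.length + 1 < Lt.length := by rw [hLt, MHVAux.len_special]; omega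
  have hLulen' : A.length < Lu.length := by rw [hLu, MHVAux.len_special]; omega
  have hLulen'' : A.length + B.length + 1 < Lu.length := by rw [hLu, MHVAux.len_special]; omega
  set Mt : Matrix (Fin m) (Fin m) (Poly n) :=
    Matrix.of (fun r c : Fin m => Ecol (Lt[r.1]'(hLtlen r)) c) with hMt
  set Mu : Matrix (Fin m) (Fin m) (Poly n) :=
    Matrix.of (fun r c : Fin m => Ecol (Lu[r.1]'(hLulen r)) c) with hMu
  have hdt : detCols Lt cols = Matrix.det Mt := detCols_eq_det Lt cols m hmt
  have hdu : detCols Lu cols = Matrix.det Mu := detCols_eq_det Lu cols m hmu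
  -- positions
  set r₁ : Fin m := ⟨A.length, by rw [hmval]; omega⟩ with hr₁
  set r₂ : Fin m := ⟨A.length + B.length + 1, by rw [hmval]; omega⟩ with hr₂
  have hr12 : r₁ ≠ r₂ := by
    intro hcon
    have := congrArg Fin.val hcon
    simp [hr₁, hr₂] at this
    omega
  -- canonical rows
  set R₁ : Fin m → Poly n := Ecol (i,j,l) with hR₁
  set R₂ : Fin m → Poly n := Ecol (j,k,l) with hR₂
  -- row identifications
  have hMtr₁ : Mt r₁ = Ecol t₁ := by
    funext c
    show Ecol (Lt[r₁.1]'(hLtlen r₁)) c = Ecol t₁ c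
    rw [show (Lt[r₁.1]'(hLtlen r₁) : Triplet n) = t₁ from MHVAux.getElem_fst A B C t₁ t₂ hLtlen']
  have hMtr₂ : Mt r₂ = Ecol t₂ := by
    funext c
    show Ecol (Lt[r₂.1]'(hLtlen r₂)) c = Ecol t₂ c
    rw [show (Lt[r₂.1]'(hLtlen r₂) : Triplet n) = t₂ from MHVAux.getElem_snd A B C t₁ t₂ hLtlen'']
  have hMur₁ : Mu r₁ = e₃ • R₁ := by
    funext c
    show Ecol (Lu[r₁.1]'(hLulen r₁)) c = _
    rw [show (Lu[r₁.1]'(hLulen r₁) : Triplet n) = u₁ from MHVAux.getElem_fst A B C u₁ u₂ hLulen']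
    simpa [Pi.smul_apply, smul_eq_mul] using lift1 e₃ u₁ (i,j,l) hrow₃ c
  have hMur₂ : Mu r₂ = e₄ • R₂ := by
    funext c
    show Ecol (Lu[r₂.1]'(hLulen r₂)) c = _
    rw [show (Lu[r₂.1]'(hLulen r₂) : Triplet n) = u₂ from MHVAux.getElem_snd A B C u₁ u₂ hLulen'']
    simpa [Pi.smul_apply, smul_eq_mul] using lift1 e₄ u₂ (j,k,l) hrow₄ c
  have hMtu : ∀ r : Fin m, r ≠ r₁ → r ≠ r₂ → Mt r = Mu r := by
    intro r h1 h2
    funext c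
    show Ecol (Lt[r.1]'(hLtlen r)) c = Ecol (Lu[r.1]'(hLulen r)) c
    rw [show (Lt[r.1]'(hLtlen r) : Triplet n) = (Lu[r.1]'(hLulen r) : Triplet n) from
      MHVAux.getElem_other A B C t₁ t₂ u₁ u₂ r.1 (hLtlen r) (hLulen r)
        (fun hc => h1 (Fin.ext hc)) (fun hc => h2 (Fin.ext hc))]
  -- the combined row identities
  have hcomb₁ : bra j l • Ecol t₁ = (e₁ * bra j k) • R₁ + (e₁ * (-(bra i j))) • R₂ := by
    funext c
    have h1 := lift1 e₁ t₁ (i,j,k) hrow₁ c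
    have h2 := lift2 (bra j l) (bra j k) (-(bra i j)) (i,j,k) (i,j,l) (j,k,l)
      (plucker_row1 hij hik hil hjk hjl hkl) c
    simp only [Pi.add_apply, Pi.smul_apply, smul_eq_mul, hR₁, hR₂]
    rw [h1]
    linear_combination e₁ * h2
  have hcomb₂ : bra j l • Ecol t₂ = (e₂ * bra k l) • R₁ + (e₂ * bra i l) • R₂ := by
    funext c
    have h1 := lift1 e₂ t₂ (i,k,l) hrow₂ c
    have h2 := lift2 (bra j l) (bra k l) (bra i l) (i,k,l) (i,j,l) (j,k,l)
      (plucker_row2 hij hik hil hjk hjl hkl) c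
    simp only [Pi.add_apply, Pi.smul_apply, smul_eq_mul, hR₁, hR₂]
    rw [h1]
    linear_combination e₂ * h2
  -- base matrix N
  set N : Matrix (Fin m) (Fin m) (Poly n) :=
    Matrix.updateRow (Matrix.updateRow Mt r₁ R₁) r₂ R₂ with hN
  -- swap matrix
  have hswap : Matrix.updateRow (Matrix.updateRow Mt r₁ R₂) r₂ R₁
      = N.submatrix (Equiv.swap r₁ r₂) id := by
    ext r c
    by_cases h1 : r = r₁
    · subst h1
      rw [Matrix.submatrix_apply, Equiv.swap_apply_left, id]
      rw [Matrix.updateRow_ne hr12, Matrix.updateRow_self]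
      rw [hN, Matrix.updateRow_self]
    · by_cases h2 : r = r₂
      · subst h2
        rw [Matrix.submatrix_apply, Equiv.swap_apply_right, id]
        rw [Matrix.updateRow_self, hN, Matrix.updateRow_ne hr12, Matrix.updateRow_self]
      · rw [Matrix.submatrix_apply, Equiv.swap_apply_of_ne_of_ne h1 h2, id]
        rw [Matrix.updateRow_ne h2, Matrix.updateRow_ne h1, hN,
          Matrix.updateRow_ne h2, Matrix.updateRow_ne h1]
  have hdetswap : Matrix.det (Matrix.updateRow (Matrix.updateRow Mt r₁ R₂) r₂ R₁)
      = - Matrix.det N := by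
    rw [hswap]
    rw [show (N.submatrix (Equiv.swap r₁ r₂) id) = N.submatrix (⇑(Equiv.swap r₁ r₂)) id from rfl]
    rw [Matrix.det_permute]
    rw [Equiv.Perm.sign_swap hr12]
    push_cast
    ring
  -- expansions with equal rows vanish
  have hzero₁ : Matrix.det (Matrix.updateRow (Matrix.updateRow Mt r₁ R₁) r₂ R₁) = 0 := by
    apply Matrix.det_zero_of_row_eq hr12
    rw [Matrix.updateRow_ne hr12, Matrix.updateRow_self, Matrix.updateRow_self]
  have hzero₂ : Matrix.det (Matrix.updateRow (Matrix.updateRow Mt r₁ R₂) r₂ R₂) = 0 := by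
    apply Matrix.det_zero_of_row_eq hr12
    rw [Matrix.updateRow_ne hr12, Matrix.updateRow_self, Matrix.updateRow_self]
  -- step 1: expand row r₁
  have step1 : bra j l * Matrix.det Mt
      = (e₁ * bra j k) * Matrix.det (Matrix.updateRow Mt r₁ R₁)
        + (e₁ * (-(bra i j))) * Matrix.det (Matrix.updateRow Mt r₁ R₂) := by
    conv_lhs => rw [← Matrix.updateRow_eq_self Mt r₁]
    rw [← Matrix.det_updateRow_smul, hMtr₁, hcomb₁, Matrix.det_updateRow_add,
      Matrix.det_updateRow_smul, Matrix.det_updateRow_smul]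
  -- step 2: expand row r₂ of each
  have step2 : ∀ R : Fin m → Poly n,
      bra j l * Matrix.det (Matrix.updateRow Mt r₁ R)
        = (e₂ * bra k l) * Matrix.det (Matrix.updateRow (Matrix.updateRow Mt r₁ R) r₂ R₁)
          + (e₂ * bra i l) * Matrix.det (Matrix.updateRow (Matrix.updateRow Mt r₁ R) r₂ R₂) := by
    intro R
    conv_lhs => rw [← Matrix.updateRow_eq_self (Matrix.updateRow Mt r₁ R) r₂]
    rw [Matrix.updateRow_ne hr12.symm, ← Matrix.det_updateRow_smul, hMtr₂, hcomb₂,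
      Matrix.det_updateRow_add, Matrix.det_updateRow_smul, Matrix.det_updateRow_smul]
  -- combine: jl² det Mt = e₁e₂ (ik jl) det N
  have hMtN : bra j l * (bra j l * Matrix.det Mt)
      = (e₁ * e₂) * (bra i k * bra j l) * Matrix.det N := by
    rw [step1]
    have s21 := step2 R₁
    have s22 := step2 R₂
    rw [hzero₁] at s21
    rw [hzero₂] at s22
    rw [hdetswap] at s22
    have expand : bra j l * ((e₁ * bra j k) * Matrix.det (Matrix.updateRow Mt r₁ R₁)
        + (e₁ * (-(bra i j))) * Matrix.det (Matrix.updateRow Mt r₁ R₂))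
        = (e₁ * bra j k) * (bra j l * Matrix.det (Matrix.updateRow Mt r₁ R₁))
          + (e₁ * (-(bra i j))) * (bra j l * Matrix.det (Matrix.updateRow Mt r₁ R₂)) := by ring
    rw [expand, s21, s22]
    have := plucker (i := i) (j := j) (k := k) (l := l)
    linear_combination (e₁ * e₂ * Matrix.det N) * this
  -- det Mu = e₃ e₄ det N
  have hMuN : Matrix.det Mu = (e₃ * e₄) * Matrix.det N := by
    have hbase : Matrix.updateRow (Matrix.updateRow Mu r₂ R₂) r₁ R₁ = N := by
      ext r c
      by_cases h1 : r = r₁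
      · subst h1
        rw [Matrix.updateRow_self, hN, Matrix.updateRow_ne hr12, Matrix.updateRow_self]
      · by_cases h2 : r = r₂
        · subst h2
          rw [Matrix.updateRow_ne hr12.symm, Matrix.updateRow_self, hN, Matrix.updateRow_self]
          
        · rw [Matrix.updateRow_ne h1, Matrix.updateRow_ne h2, hN,
            Matrix.updateRow_ne h2, Matrix.updateRow_ne h1, hMtu r h1 h2]
    calc Matrix.det Mu = Matrix.det (Matrix.updateRow Mu r₂ (e₄ • R₂)) := by
          rw [← hMur₂, Matrix.updateRow_eq_self]
      _ = e₄ * Matrix.det (Matrix.updateRow Mu r₂ R₂) := Matrix.det_updateRow_smul _ _ _ _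
      _ = e₄ * Matrix.det (Matrix.updateRow (Matrix.updateRow Mu r₂ R₂) r₁ (e₃ • R₁)) := by
          rw [show (e₃ • R₁ : Fin m → Poly n) = (Matrix.updateRow Mu r₂ R₂) r₁ by
            rw [Matrix.updateRow_ne hr12, hMur₁]]
          rw [Matrix.updateRow_eq_self]
      _ = e₄ * (e₃ * Matrix.det (Matrix.updateRow (Matrix.updateRow Mu r₂ R₂) r₁ R₁)) := by
          rw [Matrix.det_updateRow_smul]
      _ = (e₃ * e₄) * Matrix.det N := by rw [hbase]; ring
  -- the det relation
  refine ⟨e₁ * e₂ * e₃ * e₄, by linear_combination (e₂*e₂*e₃*e₃*e₄*e₄) * he₁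
    + (e₃*e₃*e₄*e₄) * he₂ + (e₄*e₄) * he₃ + he₄, ?_, ?_⟩
  · rw [hdt, hdu]
    apply mul_left_cancel₀ (bra_ne_zero hjl)
    rw [hMuN]
    linear_combination hMtN - (e₁*e₂*bra i k*bra j l*Matrix.det N*(e₄*e₄))*he₃
      - (e₁*e₂*bra i k*bra j l*Matrix.det N)*he₄
  · have hdenomt : denom Lt = denom A * (qt t₁ * denom B) * (qt t₂ * denom C) := by
      rw [hLt, denom_append, denom_append, denom_cons, denom_cons]
    have hdenomu : denom Lu = denom A * (qt u₁ * denom B) * (qt u₂ * denom C) := by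
      rw [hLu, denom_append, denom_append, denom_cons, denom_cons]
    rw [hdenomt, hdenomu, hq₁, hq₂, hq₃, hq₄]
    have hmove := qt_move (i := i) (j := j) (k := k) (l := l)
    linear_combination (e₁*e₂*denom A*denom B*denom C) * hmove
      - (e₁*e₂*denom A*denom B*denom C*(bra i k)^2*(qt (i,j,l))*(qt (j,k,l))*(e₄*e₄))*he₃
      - (e₁*e₂*denom A*denom B*denom C*(bra i k)^2*(qt (i,j,l))*(qt (j,k,l)))*he₄
lemma form_core {Dt Du dT dU β : Poly n} (e jl ik : Poly n) (he : e * e = 1)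
    (hjl : jl ≠ 0) (hβ : β ≠ 0) (hdT : dT ≠ 0) (hdU : dU ≠ 0)
    (hdet : jl * Dt = e * (ik * Du)) (hden : jl ^ 2 * dT = e * (ik ^ 2 * dU)) :
    (toFF Dt ^ 2 / (toFF β ^ 2 * toFF dT)) ^ 2
      = (toFF Du ^ 2 / (toFF β ^ 2 * toFF dU)) ^ 2 := by
  have h4 : (jl * Dt) ^ 4 = (ik * Du) ^ 4 := by
    rw [hdet]
    linear_combination ((ik * Du) ^ 4 * (e * e + 1)) * he
  have h2' : (jl ^ 2 * dT) ^ 2 = (ik ^ 2 * dU) ^ 2 := by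
    rw [hden]
    linear_combination ((ik ^ 2 * dU) ^ 2) * he
  have W : Dt ^ 4 * dU ^ 2 = Du ^ 4 * dT ^ 2 := by
    apply mul_left_cancel₀ (pow_ne_zero 8 hjl)
    linear_combination (jl ^ 4 * dU ^ 2) * h4 - (jl ^ 4 * Du ^ 4) * h2'
  have inj : Function.Injective (toFF (n := n)) := IsFractionRing.injective (Poly n) (FF n)
  have hβ' : toFF β ≠ 0 := fun hc => hβ (inj (by simpa using hc))
  have hdT' : toFF dT ≠ 0 := fun hc => hdT (inj (by simpa using hc))
  have hdU' : toFF dU ≠ 0 := fun hc => hdU (inj (by simpa using hc))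
  rw [div_pow, div_pow,
    div_eq_div_iff (pow_ne_zero 2 (mul_ne_zero (pow_ne_zero 2 hβ') hdT'))
      (pow_ne_zero 2 (mul_ne_zero (pow_ne_zero 2 hβ') hdU'))]
  have himg := congrArg toFF
    (show Dt ^ 4 * (β ^ 2 * dU) ^ 2 = Du ^ 4 * (β ^ 2 * dT) ^ 2 by
      linear_combination (β ^ 4) * W)
  simp only [map_mul, map_pow] at himg
  linear_combination himg

end MHV

/-- square move: replacing two triplets of an MHV collection with
underlying sets `{i,j,k}` and `{i,k,l}` by triplets with underlying sets `{i,j,l}`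
and `{j,k,l}` preserves the non-vanishing condition and the square of the form. -/
theorem statement1 {n : ℕ} (hn : 3 ≤ n)
    (i j k l : Fin n) (hij : i ≠ j) (hik : i ≠ k) (hil : i ≠ l)
    (hjk : j ≠ k) (hjl : j ≠ l) (hkl : k ≠ l)
    (t₁ t₂ u₁ u₂ : MHV.Triplet n) (A B C : List (MHV.Triplet n))
    (T T' : List (MHV.Triplet n))
    (hTeq : T = A ++ t₁ :: B ++ t₂ :: C)
    (hT'eq : T' = A ++ u₁ :: B ++ u₂ :: C)
    (hMHV : MHV.IsMHV n T) (hNV : MHV.NonVanishing T)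
    (ht₁ : MHV.Triplet.indices t₁ = {i, j, k})
    (ht₂ : MHV.Triplet.indices t₂ = {i, k, l})
    (hu₁ : MHV.Triplet.indices u₁ = {i, j, l})
    (hu₂ : MHV.Triplet.indices u₂ = {j, k, l}) :
    MHV.NonVanishing T' ∧
      MHV.fForm T Finset.univ ^ 2 = MHV.fForm T' Finset.univ ^ 2 := by
  subst hTeq
  subst hT'eq
  obtain ⟨hlenT, hdis⟩ := hMHV
  refine ⟨MHV.nv_move hij hik hil hjk hjl hkl ht₁ ht₂ hu₁ hu₂ A B C hNV, ?_⟩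
  have hcard : 2 ≤ (Finset.univ : Finset (Fin n)).card := by
    simp only [Finset.card_univ, Fintype.card_fin]; omega
  have h1 : (Finset.univ : Finset (Fin n)).Nonempty := Finset.card_pos.mp (by omega)
  have h2 : ((Finset.univ : Finset (Fin n)).erase ((Finset.univ : Finset (Fin n)).min' h1)).Nonempty := by
    rw [← Finset.card_pos, Finset.card_erase_of_mem (Finset.mem_univ _)]; omega
  have hab : (Finset.univ : Finset (Fin n)).min' h1
      ≠ ((Finset.univ : Finset (Fin n)).erase ((Finset.univ : Finset (Fin n)).min' h1)).min' h2 :=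
    Ne.symm (Finset.mem_erase.mp (Finset.min'_mem _ h2)).1
  obtain ⟨e, he, hdet, hden⟩ := MHV.det_square_move hij hik hil hjk hjl hkl ht₁ ht₂ hu₁ hu₂
    A B C (((Finset.univ : Finset (Fin n)).erase ((Finset.univ : Finset (Fin n)).min' h1)).erase
      (((Finset.univ : Finset (Fin n)).erase ((Finset.univ : Finset (Fin n)).min' h1)).min' h2))
  have hu₁d : u₁.Distinct := MHV.distinct_of_indices hij hil hjl hu₁
  have hu₂d : u₂.Distinct := MHV.distinct_of_indices hjk hjl hkl hu₂
  have hdis' : ∀ t ∈ (A ++ u₁ :: B ++ u₂ :: C), t.Distinct := by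
    intro t ht
    rcases List.mem_append.mp ht with h | h
    · rcases List.mem_append.mp h with h | h
      · exact hdis t (by simp [h])
      · rcases List.mem_cons.mp h with rfl | h
        · exact hu₁d
        · exact hdis t (by simp [h])
    · rcases List.mem_cons.mp h with rfl | h
      · exact hu₂d
      · exact hdis t (by simp [h])
  have hdT : MHV.denom (A ++ t₁ :: B ++ t₂ :: C) ≠ 0 := MHV.denom_ne_zero _ hdis
  have hdU : MHV.denom (A ++ u₁ :: B ++ u₂ :: C) ≠ 0 := MHV.denom_ne_zero _ hdis'
  simp only [MHV.fForm, MHV.Mdet, dif_pos hcard]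
  exact MHV.form_core e (MHV.bra j l) (MHV.bra i k) he (MHV.bra_ne_zero hjl)
    (MHV.bra_ne_zero hab) hdT hdU hdet hden
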